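/- arXiv:1802.04316 — 2 statements merged into one kernel-verified Lean document; each statement's English description precedes it below -/
import Mathlib

section
/- Let R be a 2,3-torsion free alternative ring with nontrivial idempotent e1 satisfying conditions (1)-(3) as in the Peirce decomposition setting. If a11 ∈ R11, a22 ∈ R22 and [a11 + a22, x] = 0 for all x ∈ R21, then a11 + a22 ∈ Z(R). -/
/-- Peirce idempotents: `pe e1 0 = e1`, `pe e1 1 = 1 - e1`. -/
def pe {R : Type*} [NonAssocRing R] (e1 : R) : Fin 2 → R := ![e1, 1 - e1]

/-- Membership in the Peirce component `R_{ij} = e_i R e_j`. -/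
def InP {R : Type*} [NonAssocRing R] (e1 : R) (i j : Fin 2) (x : R) : Prop :=
  ∃ r : R, x = pe e1 i * r * pe e1 j

/-- Condition (1): `x_{ij} R_{ji} = 0 ⟹ x_{ij} = 0` for `i ≠ j`. -/
def Cond1 {R : Type*} [NonAssocRing R] (e1 : R) : Prop :=
  ∀ i j : Fin 2, i ≠ j → ∀ x : R, InP e1 i j x →
    (∀ y : R, InP e1 j i y → x * y = 0) → x = 0

/-- Condition (2): `x_{11} R_{12} = 0` or `R_{21} x_{11} = 0` implies `x_{11} = 0`. -/
def Cond2 {R : Type*} [NonAssocRing R] (e1 : R) : Prop :=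
  ∀ x : R, InP e1 0 0 x →
    ((∀ y : R, InP e1 0 1 y → x * y = 0) ∨ (∀ y : R, InP e1 1 0 y → y * x = 0)) → x = 0

/-- Condition (3): `R_{12} x_{22} = 0` or `x_{22} R_{21} = 0` implies `x_{22} = 0`. -/
def Cond3 {R : Type*} [NonAssocRing R] (e1 : R) : Prop :=
  ∀ x : R, InP e1 1 1 x →
    ((∀ y : R, InP e1 0 1 y → y * x = 0) ∨ (∀ y : R, InP e1 1 0 y → x * y = 0)) → x = 0
/-!
Write `a₁₁ + a₂₂ = d 0 + d 1` and say that `d` intertwines on `R_ij` when `d i * x = x * d j`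
for `x ∈ R_ij`; by the Peirce multiplication rules this is exactly `[a₁₁ + a₂₂, x] = 0`.
The hypothesis is intertwining on `R_21`. Multiplying the defect `d i * x - x * d j` by a
Peirce component of the opposite shape and moving factors across associators that vanish by
the Peirce rules shows that it is annihilated on one side, so conditions (2), (1), (3) give
intertwining on `R_11`, `R_12`, `R_22` in turn. Thus `a = a₁₁ + a₂₂` commutes with all of `R`,
and in an alternative ring `3 (x, y, a) = [xy, a] - x [y, a] - [x, a] y = 0` makes it nuclear.
The paper's Peirce indices `1, 2` are `0, 1 : Fin 2` in the code.
-/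

class IsAlternative (R : Type*) [Mul R] : Prop where
  mul_self_mul (x y : R) : x * x * y = x * (x * y)
  mul_mul_self (x y : R) : y * x * x = y * (x * x)

section Alternative

variable {R : Type*} [NonUnitalNonAssocRing R] [IsAlternative R]

theorem associator_self_left (x y : R) : associator x x y = 0 :=
  sub_eq_zero.mpr (IsAlternative.mul_self_mul x y)

theorem associator_self_right (x y : R) : associator y x x = 0 :=
  sub_eq_zero.mpr (IsAlternative.mul_mul_self x y)

theorem associator_swap_left (x y z : R) : associator y x z = -associator x y z := by
  have h : associator y x z + associator x y z =
      associator (x + y) (x + y) z - associator x x z - associator y y z := by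
    simp only [associator_apply, add_mul, mul_add]; abel
  rw [associator_self_left, associator_self_left, associator_self_left, sub_zero, sub_zero] at h
  exact eq_neg_of_add_eq_zero_left h

theorem associator_swap_right (x y z : R) : associator x z y = -associator x y z := by
  have h : associator x z y + associator x y z =
      associator x (y + z) (y + z) - associator x y y - associator x z z := by
    simp only [associator_apply, add_mul, mul_add]; abel
  rw [associator_self_right, associator_self_right, associator_self_right, sub_zero,
    sub_zero] at h
  exact eq_neg_of_add_eq_zero_left h

theorem associator_cyclic (x y z : R) : associator y z x = associator x y z := by
  rw [associator_swap_right, associator_swap_left, neg_neg]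

theorem associator_flexible (x y : R) : associator x y x = 0 := by
  rw [associator_swap_right, associator_self_left, neg_zero]

theorem IsIdempotentElem.corner_mul_eq_zero (h2 : ∀ x : R, (2 : ℕ) • x = 0 → x = 0)
    {p x y : R} (hp : IsIdempotentElem p) (hpx : p * x = x) (hxp : x * p = x) (hpy : p * y = 0) :
    x * y = 0 := by
  have hpxy : p * (x * y) = (2 : ℕ) • (x * y) := by
    have h := associator_swap_left x p y
    simp only [associator_apply, hpx, hxp, hpy, mul_zero, sub_zero] at h
    rw [two_nsmul]; linear_combination (norm := abel) -h
  have hp2 : p * (p * (x * y)) = p * (x * y) := by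
    rw [← IsAlternative.mul_self_mul, hp.eq]
  rw [hpxy, mul_smul_comm, hpxy, two_nsmul (2 • _)] at hp2
  exact h2 _ (add_eq_right.mp hp2)

theorem IsIdempotentElem.mul_corner_eq_zero (h2 : ∀ x : R, (2 : ℕ) • x = 0 → x = 0)
    {p x y : R} (hp : IsIdempotentElem p) (hxp : x * p = 0) (hpy : p * y = y) (hyp : y * p = y) :
    x * y = 0 := by
  have hxyp : x * y * p = (2 : ℕ) • (x * y) := by
    have h := associator_swap_right x p y
    simp only [associator_apply, hyp, hxp, hpy, zero_mul, zero_sub] at h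
    rw [two_nsmul]; linear_combination (norm := abel) h
  have hp2 : x * y * p * p = x * y * p := by
    rw [IsAlternative.mul_mul_self, hp.eq]
  rw [hxyp, smul_mul_assoc, hxyp, two_nsmul (2 • _)] at hp2
  exact h2 _ (add_eq_right.mp hp2)

theorem mem_center_of_forall_commute (h3 : ∀ x : R, (3 : ℕ) • x = 0 → x = 0) {a : R}
    (ha : ∀ x, Commute a x) : a ∈ Set.center R := by
  have hnuc (x y : R) : associator x y a = 0 := by
    refine h3 _ ?_
    calc (3 : ℕ) • associator x y a
        = associator x y a - associator x a y + associator a x y := by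
          rw [associator_swap_right x y a, ← associator_cyclic a x y]; abel
      _ = (x * y * a - a * (x * y)) - x * (y * a - a * y) - (x * a - a * x) * y := by
          simp only [associator_apply, mul_sub, sub_mul]; abel
      _ = 0 := by simp only [(ha _).eq, sub_self, mul_zero, zero_mul]
  refine Set.mem_center_iff.mpr ⟨ha, fun b c => ?_, fun b c => sub_eq_zero.mp (hnuc b c)⟩
  rw [eq_comm, ← sub_eq_zero, ← associator_apply, ← associator_cyclic]
  exact hnuc b c

end Alternative

section Peirce

variable {R : Type*} [NonAssocRing R] {e : R}

theorem isIdempotentElem_pe (he : IsIdempotentElem e) (i : Fin 2) : IsIdempotentElem (pe e i) := by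
  fin_cases i
  exacts [he, he.one_sub]

theorem pe_eq_one_sub_of_ne {i j : Fin 2} (h : i ≠ j) : pe e i = 1 - pe e j := by
  fin_cases i <;> fin_cases j <;> simp_all [pe]

theorem sum_sum_pe_mul_mul_pe (g : R) : ∑ i, ∑ j, pe e i * g * pe e j = g := by
  have hsum : ∑ i, pe e i = 1 := by simp [pe, Fin.sum_univ_two]
  simp only [← Finset.mul_sum, ← Finset.sum_mul, hsum, one_mul, mul_one]

theorem InP.sub {i j : Fin 2} {x y : R} (hx : InP e i j x) (hy : InP e i j y) :
    InP e i j (x - y) := by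
  obtain ⟨r, rfl⟩ := hx
  obtain ⟨s, rfl⟩ := hy
  exact ⟨r - s, by rw [mul_sub, sub_mul]⟩

variable [IsAlternative R]

theorem associator_pe_pe (i j : Fin 2) (r : R) : associator (pe e i) r (pe e j) = 0 := by
  have flex : e * r * e = e * (r * e) := sub_eq_zero.mp (associator_flexible e r)
  fin_cases i <;> fin_cases j <;> simp [pe, associator_apply, mul_sub, sub_mul, flex]

theorem inP_iff (he : IsIdempotentElem e) {i j : Fin 2} {x : R} :
    InP e i j x ↔ pe e i * x = x ∧ x * pe e j = x := by
  constructor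
  · rintro ⟨r, rfl⟩
    constructor
    · rw [sub_eq_zero.mp (associator_pe_pe i j r), ← IsAlternative.mul_self_mul,
        (isIdempotentElem_pe he i).eq]
    · rw [IsAlternative.mul_mul_self, (isIdempotentElem_pe he j).eq]
  · rintro ⟨hl, hr⟩
    exact ⟨x, by rw [hl, hr]⟩

namespace InP

variable {i j k l m : Fin 2} {x y z : R}

theorem pe_mul (he : IsIdempotentElem e) (hx : InP e i j x) : pe e i * x = x :=
  ((inP_iff he).mp hx).1

theorem mul_pe (he : IsIdempotentElem e) (hx : InP e i j x) : x * pe e j = x :=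
  ((inP_iff he).mp hx).2

theorem pe_mul_of_ne (he : IsIdempotentElem e) (hx : InP e i j x) (h : k ≠ i) :
    pe e k * x = 0 := by
  rw [pe_eq_one_sub_of_ne h, sub_mul, one_mul, hx.pe_mul he, sub_self]

theorem mul_pe_of_ne (he : IsIdempotentElem e) (hx : InP e i j x) (h : j ≠ k) :
    x * pe e k = 0 := by
  rw [pe_eq_one_sub_of_ne h.symm, mul_sub, mul_one, hx.mul_pe he, sub_self]

theorem associator_pe (he : IsIdempotentElem e) (hx : InP e i j x) (hy : InP e j k y)
    (m : Fin 2) : associator x (pe e m) y = 0 := by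
  rw [associator_apply]
  by_cases hm : j = m
  · subst hm
    rw [hx.mul_pe he, hy.pe_mul he, sub_self]
  · rw [hx.mul_pe_of_ne he hm, hy.pe_mul_of_ne he (Ne.symm hm), zero_mul, mul_zero, sub_zero]

theorem mul (he : IsIdempotentElem e) (hx : InP e i j x) (hy : InP e j k y) :
    InP e i k (x * y) := by
  refine (inP_iff he).mpr ⟨?_, ?_⟩
  · have h := hx.associator_pe he hy i
    rw [associator_swap_left, neg_eq_zero, associator_apply, hx.pe_mul he, sub_eq_zero] at h
    exact h.symm
  · have h := hx.associator_pe he hy k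
    rwa [associator_swap_right, neg_eq_zero, associator_apply, hy.mul_pe he, sub_eq_zero] at h

theorem mul_eq_zero_of_diag_left (h2 : ∀ x : R, (2 : ℕ) • x = 0 → x = 0)
    (he : IsIdempotentElem e) (hx : InP e i i x) (hy : InP e k l y) (h : i ≠ k) : x * y = 0 :=
  (isIdempotentElem_pe he i).corner_mul_eq_zero h2 (hx.pe_mul he) (hx.mul_pe he)
    (hy.pe_mul_of_ne he h)

theorem mul_eq_zero_of_diag_right (h2 : ∀ x : R, (2 : ℕ) • x = 0 → x = 0)
    (he : IsIdempotentElem e) (hx : InP e i j x) (hy : InP e k k y) (h : j ≠ k) : x * y = 0 :=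
  (isIdempotentElem_pe he k).mul_corner_eq_zero h2 (hx.mul_pe_of_ne he h) (hy.pe_mul he)
    (hy.mul_pe he)

theorem associator_eq_zero_of_diag_left (h2 : ∀ x : R, (2 : ℕ) • x = 0 → x = 0)
    (he : IsIdempotentElem e) (hx : InP e i i x) (hy : InP e k l y) (hz : InP e l m z)
    (h : i ≠ k) : associator x y z = 0 := by
  rw [associator_apply, hx.mul_eq_zero_of_diag_left h2 he hy h,
    hx.mul_eq_zero_of_diag_left h2 he (hy.mul he hz) h, zero_mul, sub_zero]

theorem associator_eq_zero_of_diag_right (h2 : ∀ x : R, (2 : ℕ) • x = 0 → x = 0)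
    (he : IsIdempotentElem e) (hx : InP e i k x) (hy : InP e k l y) (hz : InP e m m z)
    (h : l ≠ m) : associator x y z = 0 := by
  rw [associator_apply, (hx.mul he hy).mul_eq_zero_of_diag_right h2 he hz h,
    hy.mul_eq_zero_of_diag_right h2 he hz h, mul_zero, sub_zero]

end InP

end Peirce

def Intertwines {R : Type*} [NonAssocRing R] (e : R) (d : Fin 2 → R) (i j : Fin 2) : Prop :=
  ∀ x, InP e i j x → d i * x = x * d j

section Intertwining

variable {R : Type*} [NonAssocRing R] [IsAlternative R] {e : R} {d : Fin 2 → R}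
  {i j k : Fin 2} {x y : R}

theorem InP.diag_sum_mul (h2 : ∀ x : R, (2 : ℕ) • x = 0 → x = 0) (he : IsIdempotentElem e)
    (hd : ∀ k, InP e k k (d k)) (hx : InP e i j x) : (∑ k, d k) * x = d i * x := by
  rw [Finset.sum_mul, Finset.sum_eq_single i
    (fun k _ hk => (hd k).mul_eq_zero_of_diag_left h2 he hx hk) (by simp)]

theorem InP.mul_diag_sum (h2 : ∀ x : R, (2 : ℕ) • x = 0 → x = 0) (he : IsIdempotentElem e)
    (hd : ∀ k, InP e k k (d k)) (hx : InP e i j x) : x * ∑ k, d k = x * d j := by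
  rw [Finset.mul_sum, Finset.sum_eq_single j
    (fun k _ hk => hx.mul_eq_zero_of_diag_right h2 he (hd k) hk.symm) (by simp)]

theorem intertwines_iff_commute (h2 : ∀ x : R, (2 : ℕ) • x = 0 → x = 0)
    (he : IsIdempotentElem e) (hd : ∀ k, InP e k k (d k)) :
    Intertwines e d i j ↔ ∀ x, InP e i j x → Commute (∑ k, d k) x := by
  refine forall₂_congr fun x hx => ?_
  rw [Commute, SemiconjBy, hx.diag_sum_mul h2 he hd, hx.mul_diag_sum h2 he hd]

theorem commute_diag_sum (h2 : ∀ x : R, (2 : ℕ) • x = 0 → x = 0) (he : IsIdempotentElem e)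
    (hd : ∀ k, InP e k k (d k)) (hI : ∀ i j, Intertwines e d i j) (g : R) :
    Commute (∑ k, d k) g := by
  rw [← sum_sum_pe_mul_mul_pe (e := e) g]
  exact Commute.sum_right _ _ _ fun i _ => Commute.sum_right _ _ _ fun j _ =>
    (intertwines_iff_commute h2 he hd).mp (hI i j) _ ⟨g, rfl⟩

theorem Intertwines.mul_commutator_eq_zero (h2 : ∀ x : R, (2 : ℕ) • x = 0 → x = 0)
    (he : IsIdempotentElem e) (hd : ∀ k, InP e k k (d k)) (hI : Intertwines e d k i)
    (hki : k ≠ i) (hx : InP e i i x) (hy : InP e k i y) : y * (d i * x - x * d i) = 0 := by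
  have h₁ : associator y (d i) x = 0 := by
    rw [associator_cyclic x y (d i)]
    exact hx.associator_eq_zero_of_diag_left h2 he hy (hd i) hki.symm
  have h₂ : associator (d k) y x = 0 := by
    rw [associator_cyclic x (d k) y]
    exact hx.associator_eq_zero_of_diag_left h2 he (hd k) hy hki.symm
  have h₃ : associator y x (d i) = 0 := by
    rw [associator_cyclic (d i) y x]
    exact (hd i).associator_eq_zero_of_diag_left h2 he hy hx hki.symm
  rw [mul_sub, sub_eq_zero]
  calc y * (d i * x) = y * d i * x := (sub_eq_zero.mp h₁).symm
    _ = d k * y * x := by rw [hI y hy]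
    _ = d k * (y * x) := sub_eq_zero.mp h₂
    _ = y * x * d i := hI _ (hy.mul he hx)
    _ = y * (x * d i) := sub_eq_zero.mp h₃

theorem Intertwines.sub_mul_eq_zero (h2 : ∀ x : R, (2 : ℕ) • x = 0 → x = 0)
    (he : IsIdempotentElem e) (hd : ∀ k, InP e k k (d k)) (hji : Intertwines e d j i)
    (hii : Intertwines e d i i) (hij : i ≠ j) (hx : InP e i j x) (hy : InP e j i y) :
    (d i * x - x * d j) * y = 0 := by
  have h₂ : associator x y (d i) = 0 := by
    rw [associator_swap_left y x (d i), neg_eq_zero]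
    exact hy.associator_eq_zero_of_diag_right h2 he hx (hd i) hij.symm
  have h₁ : associator (d i) x y = 0 := by
    rwa [← associator_cyclic (d i) x y]
  have h₃ : associator x (d j) y = 0 := by
    rw [associator_swap_left (d j) x y, neg_eq_zero]
    exact (hd j).associator_eq_zero_of_diag_left h2 he hx hy hij.symm
  rw [sub_mul, sub_eq_zero]
  calc d i * x * y = d i * (x * y) := sub_eq_zero.mp h₁
    _ = x * y * d i := hii _ (hx.mul he hy)
    _ = x * (y * d i) := sub_eq_zero.mp h₂
    _ = x * (d j * y) := by rw [hji y hy]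
    _ = x * d j * y := (sub_eq_zero.mp h₃).symm

end Intertwining

theorem central_of_comm_R21_general (R : Type*) [NonAssocRing R]
    (hAlt1 : ∀ x y : R, x * x * y = x * (x * y))
    (hAlt2 : ∀ x y : R, y * x * x = y * (x * x))
    (h2 : ∀ x : R, (2 : ℕ) • x = 0 → x = 0)
    (h3 : ∀ x : R, (3 : ℕ) • x = 0 → x = 0)
    (e1 : R) (he : e1 * e1 = e1)
    (hc1 : Cond1 e1) (hc2 : Cond2 e1) (hc3 : Cond3 e1)
    (a11 a22 : R) (ha11 : InP e1 0 0 a11) (ha22 : InP e1 1 1 a22)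
    (hcomm : ∀ x : R, InP e1 1 0 x → (a11 + a22) * x - x * (a11 + a22) = 0) :
    a11 + a22 ∈ Set.center R := by
  have : IsAlternative R := ⟨hAlt1, hAlt2⟩
  set d : Fin 2 → R := ![a11, a22]
  have hd : ∀ k, InP e1 k k (d k) := Fin.forall_fin_two.mpr ⟨ha11, ha22⟩
  have hsum : a11 + a22 = ∑ k, d k := by simp [d, Fin.sum_univ_two]
  have defect_mem (i j : Fin 2) {x : R} (hx : InP e1 i j x) : InP e1 i j (d i * x - x * d j) :=
    ((hd i).mul he hx).sub (hx.mul he (hd j))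
  rw [hsum] at hcomm ⊢
  have h10 : Intertwines e1 d 1 0 := (intertwines_iff_commute h2 he hd).mpr
    fun x hx => sub_eq_zero.mp (hcomm x hx)
  have h00 : Intertwines e1 d 0 0 := fun x hx => sub_eq_zero.mp <| hc2 _ (defect_mem 0 0 hx) <|
    .inr fun y hy => h10.mul_commutator_eq_zero h2 he hd (by decide) hx hy
  have h01 : Intertwines e1 d 0 1 := fun x hx => sub_eq_zero.mp <|
    hc1 0 1 (by decide) _ (defect_mem 0 1 hx) fun y hy =>
      h10.sub_mul_eq_zero h2 he hd h00 (by decide) hx hy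
  have h11 : Intertwines e1 d 1 1 := fun x hx => sub_eq_zero.mp <| hc3 _ (defect_mem 1 1 hx) <|
    .inl fun y hy => h01.mul_commutator_eq_zero h2 he hd (by decide) hx hy
  refine mem_center_of_forall_commute h3 (commute_diag_sum h2 he hd ?_)
  simp only [Fin.forall_fin_two]
  exact ⟨⟨h00, h01⟩, h10, h11⟩

/-- if $[a_{11}+a_{22}, R_{21}] = 0$ then $a_{11}+a_{22}$ is central. -/
theorem central_of_comm_R21 (R : Type*) [NonAssocRing R]
    (hAlt1 : ∀ x y : R, x * x * y = x * (x * y))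
    (hAlt2 : ∀ x y : R, y * x * x = y * (x * x))
    (h2 : ∀ x : R, (2 : ℕ) • x = 0 → x = 0)
    (h3 : ∀ x : R, (3 : ℕ) • x = 0 → x = 0)
    (e1 : R) (he : e1 * e1 = e1) (he0 : e1 ≠ 0) (he1 : e1 ≠ 1)
    (hc1 : Cond1 e1) (hc2 : Cond2 e1) (hc3 : Cond3 e1)
    (a11 a22 : R) (ha11 : InP e1 0 0 a11) (ha22 : InP e1 1 1 a22)
    (hcomm : ∀ x : R, InP e1 1 0 x → (a11 + a22) * x - x * (a11 + a22) = 0) :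
    a11 + a22 ∈ Set.center R :=
  central_of_comm_R21_general R hAlt1 hAlt2 h2 h3 e1 he hc1 hc2 hc3 a11 a22 ha11 ha22 hcomm
end

section
/- Let R be a 2,3-torsion free unital alternative ring with nontrivial idempotent e1 satisfying conditions (1)-(3), and let D be a Lie multiplicative derivation of R. Then the diagonal part D(e1)_{11} + D(e1)_{22} of D(e1) lies in the center Z(R). -/
class IsAlternative_s8 (R : Type*) [NonAssocRing R] : Prop where
  associator_self_left (x y : R) : associator x x y = 0
  associator_self_right (x y : R) : associator x y y = 0

namespace IsAlternative_s8

variable {R : Type*} [NonAssocRing R] [IsAlternative_s8 R]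

theorem associator_swap_left (x y z : R) : associator y x z = -associator x y z := by
  have h := associator_self_left (x + y) z
  have hx := associator_self_left x z
  have hy := associator_self_left y z
  simp only [associator_apply, add_mul, mul_add] at h hx hy ⊢
  linear_combination (norm := abel1) h - hx - hy

theorem associator_swap_right (x y z : R) : associator x z y = -associator x y z := by
  have h := associator_self_right x (y + z)
  have hy := associator_self_right x y
  have hz := associator_self_right x z
  simp only [associator_apply, add_mul, mul_add] at h hy hz ⊢
  linear_combination (norm := abel1) h - hy - hz

theorem flexible (x y : R) : x * y * x = x * (y * x) :=
  sub_eq_zero.1 <| by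
    rw [← associator_apply, associator_swap_right, associator_self_left, neg_zero]

theorem mem_center_of_forall_commute (h3 : ∀ x : R, (3 : ℕ) • x = 0 → x = 0) {z : R}
    (hz : ∀ r, Commute z r) : z ∈ Set.center R := by
  have hassoc (x y : R) : associator x y z = 0 := by
    have hsum : associator x y z - associator x z y + associator z x y = 0 := by
      simp only [associator_apply]
      rw [(hz x).eq, (hz y).eq, (hz (x * y)).eq]
      abel
    rw [associator_swap_left x z y, associator_swap_right x y z] at hsum
    exact h3 _ (by rw [← hsum]; abel)
  refine ⟨hz, fun b c => ?_, fun a b => sub_eq_zero.1 (hassoc a b)⟩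
  refine (sub_eq_zero.1 ?_).symm
  rw [← associator_apply, associator_swap_left b z c, associator_swap_right b c z, hassoc,
    neg_zero, neg_zero]

end IsAlternative_s8

namespace IsIdempotentElem

variable {R : Type*} [NonAssocRing R] [IsAlternative_s8 R] {e : R}

theorem mul_self_mul' (he : IsIdempotentElem e) (x : R) : e * (e * x) = e * x := by
  have h := IsAlternative_s8.associator_self_left e x
  rwa [associator_apply, he.eq, sub_eq_zero, eq_comm] at h

theorem mul_mul_self' (he : IsIdempotentElem e) (x : R) : x * e * e = x * e := by
  have h := IsAlternative_s8.associator_self_right x e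
  rwa [associator_apply, he.eq, sub_eq_zero] at h

end IsIdempotentElem

theorem map_zero_of_map_lie {R : Type*} [NonUnitalNonAssocRing R] {D : R → R}
    (hD : ∀ x y : R, D ⁅x, y⁆ = ⁅D x, y⁆ + ⁅x, D y⁆) : D 0 = 0 := by
  simpa [Ring.lie_def] using hD 0 0

theorem Ring.lie_one_sub_neg {R : Type*} [NonAssocRing R] (e w : R) : ⁅1 - e, -w⁆ = ⁅e, w⁆ := by
  simp only [Ring.lie_def, sub_mul, mul_sub, mul_neg, neg_mul, one_mul, mul_one]
  abel

/-- `peirceSpace e₁ 1 1`, `1 0`, `0 1`, `0 0` are the paper's `R₁₁, R₁₂, R₂₁, R₂₂`; other weights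
are allowed so that every product of Peirce elements has a weight (`peirceSpace.mul_mem`). -/
def peirceSpace {R : Type*} [NonAssocRing R] (e : R) (α β : ℤ) : Set R :=
  {x | e * x = α • x ∧ x * e = β • x}

namespace peirceSpace

variable {R : Type*} [NonAssocRing R] {e x y : R} {α β γ δ : ℤ}

theorem one_sub_mem (hx : x ∈ peirceSpace e α β) : x ∈ peirceSpace (1 - e) (1 - α) (1 - β) :=
  ⟨by rw [sub_mul, one_mul, hx.1, sub_smul, one_smul],
    by rw [mul_sub, mul_one, hx.2, sub_smul, one_smul]⟩

theorem lie_eq (hx : x ∈ peirceSpace e α β) : ⁅e, x⁆ = (α - β) • x := by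
  rw [Ring.lie_def, hx.1, hx.2, sub_smul]

theorem mul_mul_eq (hx : x ∈ peirceSpace e α β) : e * x * e = (α * β) • x := by
  rw [hx.1, smul_mul_assoc, hx.2, smul_smul]

theorem mul_mul_one_sub_eq (hx : x ∈ peirceSpace e α β) :
    e * x * (1 - e) = (α * (1 - β)) • x := by
  rw [hx.1, smul_mul_assoc, mul_sub, mul_one, hx.2]
  module

variable [IsAlternative_s8 R]

theorem mul_mem (hx : x ∈ peirceSpace e α β) (hy : y ∈ peirceSpace e γ δ) :
    x * y ∈ peirceSpace e (α + β - γ) (δ + γ - β) := by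
  have hl := IsAlternative_s8.associator_swap_left e x y
  have hr := IsAlternative_s8.associator_swap_right x e y
  simp only [associator_apply, hx.1, hx.2, hy.1, hy.2, smul_mul_assoc, mul_smul_comm] at hl hr
  constructor
  · rw [sub_smul, add_smul]
    linear_combination (norm := abel1) -hl
  · rw [sub_smul, add_smul]
    linear_combination (norm := abel1) hr

theorem eq_zero_of_mem (he : IsIdempotentElem e) (h2 : ∀ x : R, (2 : ℕ) • x = 0 → x = 0)
    (hx : x ∈ peirceSpace e α β) (hαβ : (α = -1 ∨ α = 2) ∨ (β = -1 ∨ β = 2)) : x = 0 := by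
  have of_smul (μ : ℤ) (hμ : μ = -1 ∨ μ = 2) (h : (μ * μ - μ) • x = 0) : x = 0 := by
    have hμ2 : μ * μ - μ = ((2 : ℕ) : ℤ) := by rcases hμ with rfl | rfl <;> rfl
    rw [hμ2, natCast_zsmul] at h
    exact h2 x h
  have hl : (α * α - α) • x = 0 := by
    have h := he.mul_self_mul' x
    rw [hx.1, mul_smul_comm, hx.1, smul_smul] at h
    rw [sub_smul, h, sub_self]
  have hr : (β * β - β) • x = 0 := by
    have h := he.mul_mul_self' x
    rw [hx.2, smul_mul_assoc, hx.2, smul_smul] at h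
    rw [sub_smul, h, sub_self]
  rcases hαβ with hα | hβ
  exacts [of_smul α hα hl, of_smul β hβ hr]

theorem mul_eq_zero_of_mem (he : IsIdempotentElem e) (h2 : ∀ x : R, (2 : ℕ) • x = 0 → x = 0)
    (hx : x ∈ peirceSpace e α β) (hy : y ∈ peirceSpace e γ δ)
    (h : (α + β - γ = -1 ∨ α + β - γ = 2) ∨ (δ + γ - β = -1 ∨ δ + γ - β = 2)) : x * y = 0 :=
  eq_zero_of_mem he h2 (mul_mem hx hy) h

theorem mul_mul_mem_one_one (he : IsIdempotentElem e) (a : R) : e * a * e ∈ peirceSpace e 1 1 :=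
  ⟨by rw [one_smul, IsAlternative_s8.flexible, he.mul_self_mul'],
    by rw [one_smul, he.mul_mul_self']⟩

theorem mul_mul_one_sub_mem_one_zero (he : IsIdempotentElem e) (a : R) :
    e * a * (1 - e) ∈ peirceSpace e 1 0 := by
  have h : e * a * (1 - e) = e * (a * (1 - e)) := by
    rw [mul_sub, mul_one, mul_sub, mul_sub, mul_one, IsAlternative_s8.flexible]
  refine ⟨by rw [one_smul, h, he.mul_self_mul'], ?_⟩
  rw [zero_smul, mul_sub, mul_one, sub_mul, he.mul_mul_self', sub_self]

theorem one_sub_mul_mul_one_sub_mem_zero_zero (he : IsIdempotentElem e) (a : R) :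
    (1 - e) * a * (1 - e) ∈ peirceSpace e 0 0 := by
  simpa using one_sub_mem (mul_mul_mem_one_one he.one_sub a)

theorem exists_decomposition (he : IsIdempotentElem e) (a : R) :
    ∃ a₁₀ ∈ peirceSpace e 1 0, ∃ a₀₁ ∈ peirceSpace e 0 1,
      a = e * a * e + a₁₀ + a₀₁ + (1 - e) * a * (1 - e) := by
  refine ⟨_, mul_mul_one_sub_mem_one_zero he a, (1 - e) * a * e, ?_, ?_⟩
  · simpa using one_sub_mem (mul_mul_one_sub_mem_one_zero he.one_sub a)
  · simp only [mul_sub, sub_mul, one_mul, mul_one]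
    abel

theorem mul_lie_self_mul (he : IsIdempotentElem e) (w : R) : e * ⁅e, w⁆ * e = 0 := by
  rw [Ring.lie_def, mul_sub, sub_mul, he.mul_self_mul', ← IsAlternative_s8.flexible,
    he.mul_mul_self', sub_self]

theorem mul_sub_lie_mul_one_sub (he : IsIdempotentElem e) (w : R) :
    e * (w - ⁅e, w⁆) * (1 - e) = 0 := by
  simp only [Ring.lie_def, mul_sub, sub_mul, mul_one, he.mul_self_mul',
    ← IsAlternative_s8.flexible, he.mul_mul_self']
  abel

variable {a₁₁ a₁₀ a₀₁ a₀₀ : R}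

theorem mul_lie_mul_of_mem_one_one (he : IsIdempotentElem e)
    (h2 : ∀ x : R, (2 : ℕ) • x = 0 → x = 0) (hx : x ∈ peirceSpace e 1 1)
    (h₁₁ : a₁₁ ∈ peirceSpace e 1 1) (h₁₀ : a₁₀ ∈ peirceSpace e 1 0)
    (h₀₁ : a₀₁ ∈ peirceSpace e 0 1) (h₀₀ : a₀₀ ∈ peirceSpace e 0 0) :
    e * ⁅a₁₁ + a₁₀ + a₀₁ + a₀₀, x⁆ * e = ⁅a₁₁, x⁆ := by
  have hl : a₀₀ * x = 0 := mul_eq_zero_of_mem he h2 h₀₀ hx (by norm_num)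
  have hr : x * a₀₀ = 0 := mul_eq_zero_of_mem he h2 hx h₀₀ (by norm_num)
  simp only [Ring.lie_def, add_mul, mul_add, mul_sub, sub_mul, hl, hr,
    mul_mul_eq (mul_mem h₁₁ hx), mul_mul_eq (mul_mem h₁₀ hx), mul_mul_eq (mul_mem h₀₁ hx),
    mul_mul_eq (mul_mem hx h₁₁), mul_mul_eq (mul_mem hx h₁₀), mul_mul_eq (mul_mem hx h₀₁)]
  norm_num

theorem mul_lie_mul_one_sub_of_mem_one_zero (hx : x ∈ peirceSpace e 1 0)
    (h₁₁ : a₁₁ ∈ peirceSpace e 1 1) (h₁₀ : a₁₀ ∈ peirceSpace e 1 0)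
    (h₀₁ : a₀₁ ∈ peirceSpace e 0 1) (h₀₀ : a₀₀ ∈ peirceSpace e 0 0) :
    e * ⁅a₁₁ + a₁₀ + a₀₁ + a₀₀, x⁆ * (1 - e) = a₁₁ * x - x * a₀₀ := by
  simp only [Ring.lie_def, add_mul, mul_add, sub_mul, mul_sub e,
    mul_mul_one_sub_eq (mul_mem h₁₁ hx), mul_mul_one_sub_eq (mul_mem h₁₀ hx),
    mul_mul_one_sub_eq (mul_mem h₀₁ hx), mul_mul_one_sub_eq (mul_mem h₀₀ hx),
    mul_mul_one_sub_eq (mul_mem hx h₁₁), mul_mul_one_sub_eq (mul_mem hx h₁₀),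
    mul_mul_one_sub_eq (mul_mem hx h₀₁), mul_mul_one_sub_eq (mul_mem hx h₀₀)]
  norm_num

variable {a w : R}

theorem commute_of_lie_add_lie_eq_zero (he : IsIdempotentElem e)
    (h2 : ∀ x : R, (2 : ℕ) • x = 0 → x = 0) (hx : x ∈ peirceSpace e 1 1)
    (h : ⁅a, x⁆ + ⁅e, w⁆ = 0) : Commute (e * a * e) x := by
  obtain ⟨a₁₀, h₁₀, a₀₁, h₀₁, ha⟩ := exists_decomposition he a
  have h' := congrArg (e * · * e) h
  simp only [mul_add, add_mul, mul_lie_self_mul he, add_zero, mul_zero, zero_mul] at h'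
  rw [ha, mul_lie_mul_of_mem_one_one he h2 hx (mul_mul_mem_one_one he a) h₁₀ h₀₁
    (one_sub_mul_mul_one_sub_mem_zero_zero he a)] at h'
  exact sub_eq_zero.1 h'

theorem mul_eq_mul_of_eq_lie_add_lie (he : IsIdempotentElem e) (hx : x ∈ peirceSpace e 1 0)
    (h : w = ⁅a, x⁆ + ⁅e, w⁆) : e * a * e * x = x * ((1 - e) * a * (1 - e)) := by
  obtain ⟨a₁₀, h₁₀, a₀₁, h₀₁, ha⟩ := exists_decomposition he a
  have h' := congrArg (e * · * (1 - e)) (sub_eq_of_eq_add h)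
  simp only [mul_sub_lie_mul_one_sub he] at h'
  rw [ha, mul_lie_mul_one_sub_of_mem_one_zero hx (mul_mul_mem_one_one he a) h₁₀ h₀₁
    (one_sub_mul_mul_one_sub_mem_zero_zero he a)] at h'
  exact sub_eq_zero.1 h'.symm

theorem commute_add_of_mem (he : IsIdempotentElem e) (h2 : ∀ x : R, (2 : ℕ) • x = 0 → x = 0)
    {u v : R} (hu : u ∈ peirceSpace e 1 1) (hv : v ∈ peirceSpace e 0 0)
    (h₁₁ : ∀ x ∈ peirceSpace e 1 1, Commute u x) (h₀₀ : ∀ x ∈ peirceSpace e 0 0, Commute v x)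
    (h₁₀ : ∀ x ∈ peirceSpace e 1 0, u * x = x * v)
    (h₀₁ : ∀ x ∈ peirceSpace e 0 1, x * u = v * x) (r : R) : Commute (u + v) r := by
  obtain ⟨r₁₀, hr₁₀, r₀₁, hr₀₁, hr⟩ := exists_decomposition he r
  have hr₁₁ := mul_mul_mem_one_one he r
  have hr₀₀ := one_sub_mul_mul_one_sub_mem_zero_zero he r
  rw [hr]
  refine .add_right (.add_right (.add_right ?_ ?_) ?_) ?_
  · refine (h₁₁ _ hr₁₁).add_left ?_
    rw [Commute, SemiconjBy, mul_eq_zero_of_mem he h2 hv hr₁₁ (by norm_num),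
      mul_eq_zero_of_mem he h2 hr₁₁ hv (by norm_num)]
  · rw [Commute, SemiconjBy, add_mul, mul_add, h₁₀ _ hr₁₀,
      mul_eq_zero_of_mem he h2 hv hr₁₀ (by norm_num),
      mul_eq_zero_of_mem he h2 hr₁₀ hu (by norm_num), add_zero, zero_add]
  · rw [Commute, SemiconjBy, add_mul, mul_add, ← h₀₁ _ hr₀₁,
      mul_eq_zero_of_mem he h2 hu hr₀₁ (by norm_num),
      mul_eq_zero_of_mem he h2 hr₀₁ hv (by norm_num), add_zero, zero_add]
  · refine .add_left ?_ (h₀₀ _ hr₀₀)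
    rw [Commute, SemiconjBy, mul_eq_zero_of_mem he h2 hu hr₀₀ (by norm_num),
      mul_eq_zero_of_mem he h2 hr₀₀ hu (by norm_num)]

section LieDerivation

variable {D : R → R}

theorem commute_mul_map_mul_of_mem_one_one (he : IsIdempotentElem e)
    (h2 : ∀ x : R, (2 : ℕ) • x = 0 → x = 0) (hD : ∀ x y : R, D ⁅x, y⁆ = ⁅D x, y⁆ + ⁅x, D y⁆)
    (hx : x ∈ peirceSpace e 1 1) : Commute (e * D e * e) x :=
  commute_of_lie_add_lie_eq_zero he h2 hx (w := D x) <| by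
    rw [← hD, lie_eq hx, sub_self, zero_smul, map_zero_of_map_lie hD]

theorem commute_one_sub_mul_map_mul_one_sub_of_mem_zero_zero (he : IsIdempotentElem e)
    (h2 : ∀ x : R, (2 : ℕ) • x = 0 → x = 0) (hD : ∀ x y : R, D ⁅x, y⁆ = ⁅D x, y⁆ + ⁅x, D y⁆)
    (hx : x ∈ peirceSpace e 0 0) : Commute ((1 - e) * D e * (1 - e)) x :=
  commute_of_lie_add_lie_eq_zero he.one_sub h2 (by simpa using one_sub_mem hx) (w := -D x) <| by
    rw [Ring.lie_one_sub_neg, ← hD, lie_eq hx, sub_self, zero_smul, map_zero_of_map_lie hD]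

theorem map_mul_mul_mul_eq_of_mem_one_zero (he : IsIdempotentElem e)
    (hD : ∀ x y : R, D ⁅x, y⁆ = ⁅D x, y⁆ + ⁅x, D y⁆) (hx : x ∈ peirceSpace e 1 0) :
    e * D e * e * x = x * ((1 - e) * D e * (1 - e)) :=
  mul_eq_mul_of_eq_lie_add_lie he hx (w := D x) <| by
    rw [← hD, lie_eq hx, sub_zero, one_smul]

theorem mul_map_mul_eq_of_mem_zero_one (he : IsIdempotentElem e)
    (hD : ∀ x y : R, D ⁅x, y⁆ = ⁅D x, y⁆ + ⁅x, D y⁆) (hx : x ∈ peirceSpace e 0 1) :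
    x * (e * D e * e) = (1 - e) * D e * (1 - e) * x := by
  have hxe : ⁅x, e⁆ = x := by rw [Ring.lie_def, hx.1, hx.2, one_smul, zero_smul, sub_zero]
  have h := mul_eq_mul_of_eq_lie_add_lie he.one_sub (by simpa using one_sub_mem hx)
    (a := D e) (w := -D x) <| by
      have hDx := hD x e
      rw [hxe] at hDx
      rw [Ring.lie_one_sub_neg]
      simp only [Ring.lie_def] at hDx ⊢
      linear_combination (norm := abel1) -hDx
  rwa [sub_sub_cancel, eq_comm] at h

end LieDerivation

end peirceSpace

theorem diag_part_D_e1_central_general (R : Type*) [NonAssocRing R]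
    (hAlt1 : ∀ x y : R, x * x * y = x * (x * y))
    (hAlt2 : ∀ x y : R, y * x * x = y * (x * x))
    (h2 : ∀ x : R, (2 : ℕ) • x = 0 → x = 0)
    (h3 : ∀ x : R, (3 : ℕ) • x = 0 → x = 0)
    (e1 : R) (he : e1 * e1 = e1)
    (D : R → R)
    (hD : ∀ x y : R, D (x * y - y * x) =
      (D x * y - y * D x) + (x * D y - D y * x)) :
    e1 * D e1 * e1 + (1 - e1) * D e1 * (1 - e1) ∈ Set.center R := by
  have : IsAlternative_s8 R :=
    ⟨fun x y => sub_eq_zero.2 (hAlt1 x y), fun x y => sub_eq_zero.2 (hAlt2 y x)⟩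
  have he : IsIdempotentElem e1 := he
  exact IsAlternative_s8.mem_center_of_forall_commute h3 <|
    peirceSpace.commute_add_of_mem he h2 (peirceSpace.mul_mul_mem_one_one he _)
      (peirceSpace.one_sub_mul_mul_one_sub_mem_zero_zero he _)
      (fun _ => peirceSpace.commute_mul_map_mul_of_mem_one_one he h2 hD)
      (fun _ => peirceSpace.commute_one_sub_mul_map_mul_one_sub_of_mem_zero_zero he h2 hD)
      (fun _ => peirceSpace.map_mul_mul_mul_eq_of_mem_one_zero he hD)
      (fun _ => peirceSpace.mul_map_mul_eq_of_mem_zero_one he hD)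

/-- the diagonal part $D(e_1)_{11} + D(e_1)_{22}$ of $D(e_1)$ is central. -/
theorem diag_part_D_e1_central (R : Type*) [NonAssocRing R]
    (hAlt1 : ∀ x y : R, x * x * y = x * (x * y))
    (hAlt2 : ∀ x y : R, y * x * x = y * (x * x))
    (h2 : ∀ x : R, (2 : ℕ) • x = 0 → x = 0)
    (h3 : ∀ x : R, (3 : ℕ) • x = 0 → x = 0)
    (e1 : R) (he : e1 * e1 = e1) (he0 : e1 ≠ 0) (he1 : e1 ≠ 1)
    (hc1 : Cond1 e1) (hc2 : Cond2 e1) (hc3 : Cond3 e1)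
    (D : R → R)
    (hD : ∀ x y : R, D (x * y - y * x) =
      (D x * y - y * D x) + (x * D y - D y * x)) :
    e1 * D e1 * e1 + (1 - e1) * D e1 * (1 - e1) ∈ Set.center R :=
  diag_part_D_e1_central_general R hAlt1 hAlt2 h2 h3 e1 he D hD
end
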